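/- Let Q and P be probability measures on a measurable space Θ with Q absolutely continuous with respect to P, and let f : Θ → ℝ be bounded measurable. Then E_Q[f] ≤ KL(Q ‖ P) + log E_P[exp(f)]. -/

import Mathlib

/-!
Tilt `P` by `f`: the measure `P.tilted f` has density `exp f / E_P[exp f]`, so
`llr Q (P.tilted f) = llr Q P - f + log E_P[exp f]`. Integrating against `Q` and applying Gibbs'
inequality `0 ≤ KL(Q ‖ P.tilted f)` gives the claim. When `log (dQ/dP)` is not `Q`-integrable the
divergence is `⊤` and there is nothing to prove.
-/

open MeasureTheory Real
open scoped Classical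

/-- KL divergence, valued in `EReal`: the expected log-likelihood ratio when it
is well defined (absolute continuity and integrability), and `⊤` otherwise. -/
noncomputable def klDiv {Θ : Type*} [MeasurableSpace Θ] (Q P : Measure Θ) : EReal :=
  if Q ≪ P ∧ Integrable (llr Q P) Q then ((∫ x, llr Q P x ∂Q : ℝ) : EReal) else ⊤

section DonskerVaradhan

variable {Θ : Type*} [MeasurableSpace Θ] {μ ν : Measure Θ} {f : Θ → ℝ}

lemma integral_llr_nonneg [IsProbabilityMeasure μ] [IsProbabilityMeasure ν]
    (hμν : μ ≪ ν) (h_int : Integrable (llr μ ν) μ) :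
    0 ≤ ∫ x, llr μ ν x ∂μ := by
  simpa using InformationTheory.integral_llr_add_sub_measure_univ_nonneg hμν h_int

lemma integral_sub_log_integral_exp_le_integral_llr [IsProbabilityMeasure μ]
    [IsProbabilityMeasure ν] (hμν : μ ≪ ν) (h_int : Integrable (llr μ ν) μ)
    (hfμ : Integrable f μ) (hfν : Integrable (fun x ↦ exp (f x)) ν) :
    ∫ x, f x ∂μ - log (∫ x, exp (f x) ∂ν) ≤ ∫ x, llr μ ν x ∂μ := by
  have : IsProbabilityMeasure (ν.tilted f) := isProbabilityMeasure_tilted hfν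
  have h_gibbs := integral_llr_nonneg (hμν.trans (absolutelyContinuous_tilted hfν))
    (integrable_llr_tilted_right hμν hfμ h_int hfν)
  rw [integral_llr_tilted_right hμν hfμ hfν h_int] at h_gibbs
  linarith

lemma integrable_of_abs_le [IsFiniteMeasure μ] (hf : Measurable f) {C : ℝ}
    (hbdd : ∀ x, |f x| ≤ C) : Integrable f μ :=
  .of_bound hf.aestronglyMeasurable C (.of_forall hbdd)

lemma integrable_exp_of_abs_le [IsFiniteMeasure μ] (hf : Measurable f) {C : ℝ}
    (hbdd : ∀ x, |f x| ≤ C) : Integrable (fun x ↦ exp (f x)) μ :=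
  .of_bound hf.exp.aestronglyMeasurable (exp C) <| .of_forall fun x ↦ by
    rw [norm_of_nonneg (exp_nonneg _)]
    exact exp_le_exp.mpr (abs_le.mp (hbdd x)).2

end DonskerVaradhan

theorem donsker_varadhan_ineq {Θ : Type*} [MeasurableSpace Θ]
    (Q P : Measure Θ) [IsProbabilityMeasure Q] [IsProbabilityMeasure P]
    (hQP : Q ≪ P)
    (f : Θ → ℝ) (hf : Measurable f) (C : ℝ) (hbdd : ∀ x, |f x| ≤ C) :
    ((∫ x, f x ∂Q : ℝ) : EReal) ≤
      klDiv Q P + ((Real.log (∫ x, exp (f x) ∂P) : ℝ) : EReal) := by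
  by_cases h_int : Integrable (llr Q P) Q
  · rw [klDiv, if_pos ⟨hQP, h_int⟩, ← EReal.coe_add, EReal.coe_le_coe_iff]
    have := integral_sub_log_integral_exp_le_integral_llr hQP h_int
      (integrable_of_abs_le hf hbdd) (integrable_exp_of_abs_le hf hbdd)
    linarith
  · rw [klDiv, if_neg fun h ↦ h_int h.2, EReal.top_add_of_ne_bot (EReal.coe_ne_bot _)]
    exact le_top
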